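/- arXiv:2306.04592 — 4 statements merged into one kernel-verified Lean document; each statement's English description precedes it below -/
import Mathlib

section
/- Let Y ∈ ℝ^{N×M} and let C = [[ (z−β₁)·I_N, −β₄·Y ], [ −β₄·Yᵀ, (z−β₂)·I_M − β₃·Yᵀ·Y ]]. Then det C = (z−β₂)^{M−N} · ∏_{k=1}^{N} [ (z−β₁)(z−β₂) − (β₄² + β₃(z−β₁))·σ_k² ], where σ₁,…,σ_N are the singular values of Y (assuming M ≥ N). -/
open Matrix

/-- Determinant of the block matrix
`C = [[(z−β₁)I_N, −β₄ Y],[−β₄ Yᵀ, (z−β₂)I_M − β₃ YᵀY]]` in terms of the singular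
values `σ₁,…,σ_N` of `Y` (encoded via an SVD `Y = U Γ Vᵀ` with `U, V` orthogonal and
`Γ` the rectangular diagonal matrix of the `σ_k`), assuming `M ≥ N`:
`det C = (z−β₂)^(M−N) ∏ₖ [(z−β₁)(z−β₂) − (β₄² + β₃(z−β₁)) σₖ²]`. -/
theorem det_blockMatrix_singularValues (N M : ℕ) (hNM : N ≤ M)
    (Y : Matrix (Fin N) (Fin M) ℝ) (σ : Fin N → ℝ)
    (U : Matrix (Fin N) (Fin N) ℝ) (V : Matrix (Fin M) (Fin M) ℝ)
    (hU₁ : U * Uᵀ = 1) (hU₂ : Uᵀ * U = 1)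
    (hV₁ : V * Vᵀ = 1) (hV₂ : Vᵀ * V = 1)
    (hSVD : Y = U * Matrix.of (fun (i : Fin N) (j : Fin M) => if (i : ℕ) = (j : ℕ) then σ i else 0) * Vᵀ)
    (z β₁ β₂ β₃ β₄ : ℝ) :
    (Matrix.fromBlocks
        ((z - β₁) • (1 : Matrix (Fin N) (Fin N) ℝ))
        ((-β₄) • Y)
        ((-β₄) • Yᵀ)
        ((z - β₂) • (1 : Matrix (Fin M) (Fin M) ℝ) - β₃ • (Yᵀ * Y))).det
      = (z - β₂) ^ (M - N) *
          ∏ k : Fin N, ((z - β₁) * (z - β₂) - (β₄ ^ 2 + β₃ * (z - β₁)) * σ k ^ 2) := by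
  classical
  set Γ : Matrix (Fin N) (Fin M) ℝ :=
    Matrix.of (fun (i : Fin N) (j : Fin M) => if (i : ℕ) = (j : ℕ) then σ i else 0) with hΓ
  set d : Fin M → ℝ := fun j => if h : (j : ℕ) < N then (σ ⟨j, h⟩) ^ 2 else 0 with hd
  -- ΓᵀΓ is diagonal
  have hΓΓ : Γᵀ * Γ = Matrix.diagonal d := by
    ext j j'
    simp only [Matrix.mul_apply, Matrix.transpose_apply, hΓ, Matrix.of_apply,
      Matrix.diagonal_apply]
    by_cases hj : (j : ℕ) < N
    · rw [Finset.sum_eq_single (⟨(j : ℕ), hj⟩ : Fin N)]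
      · by_cases hjj : j = j'
        · subst hjj
          simp [hd, hj, sq]
        · have : ((j : ℕ)) ≠ ((j' : ℕ)) := fun h => hjj (Fin.ext h)
          simp [this, hjj]
      · intro i _ hi
        have : ((i : ℕ)) ≠ ((j : ℕ)) := by
          intro h
          exact hi (Fin.ext h)
        simp [this]
      · simp
    · have hall : ∀ i : Fin N, ((i : ℕ)) ≠ ((j : ℕ)) := by
        intro i h
        exact hj (h ▸ i.isLt)
      have hdj : d j = 0 := by simp [hd, hj]
      simp [hall, hdj]
  have hYtY : Yᵀ * Y = V * Matrix.diagonal d * Vᵀ := by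
    rw [hSVD]
    simp only [Matrix.transpose_mul, Matrix.transpose_transpose, Matrix.mul_assoc]
    rw [← Matrix.mul_assoc Uᵀ U, hU₂, Matrix.one_mul, ← Matrix.mul_assoc Γᵀ Γ, hΓΓ]
  -- the two sides as functions of z
  set F : ℝ → ℝ := fun w =>
    (Matrix.fromBlocks
        ((w - β₁) • (1 : Matrix (Fin N) (Fin N) ℝ))
        ((-β₄) • Y)
        ((-β₄) • Yᵀ)
        ((w - β₂) • (1 : Matrix (Fin M) (Fin M) ℝ) - β₃ • (Yᵀ * Y))).det with hF
  set G : ℝ → ℝ := fun w =>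
    (w - β₂) ^ (M - N) *
      ∏ k : Fin N, ((w - β₁) * (w - β₂) - (β₄ ^ 2 + β₃ * (w - β₁)) * σ k ^ 2) with hG
  -- determinant of shifted diagonal-conjugate
  have hdetS : ∀ (w c : ℝ),
      ((w - β₂) • (1 : Matrix (Fin M) (Fin M) ℝ) - c • (Yᵀ * Y)).det
        = ∏ j : Fin M, ((w - β₂) - c * d j) := by
    intro w c
    have h1 : (w - β₂) • (1 : Matrix (Fin M) (Fin M) ℝ) - c • (Yᵀ * Y)
        = V * ((w - β₂) • (1 : Matrix (Fin M) (Fin M) ℝ) - c • Matrix.diagonal d) * Vᵀ := by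
      rw [hYtY]
      have hx : V * ((w - β₂) • (1 : Matrix (Fin M) (Fin M) ℝ) - c • Matrix.diagonal d) * Vᵀ
          = (w - β₂) • (V * Vᵀ) - c • (V * Matrix.diagonal d * Vᵀ) := by
        rw [Matrix.mul_sub, Matrix.sub_mul, Matrix.mul_smul, Matrix.mul_one,
          Matrix.smul_mul, Matrix.mul_smul, Matrix.smul_mul]
      rw [hx, hV₁]
    have h2 : (w - β₂) • (1 : Matrix (Fin M) (Fin M) ℝ) - c • Matrix.diagonal d
        = Matrix.diagonal (fun j => (w - β₂) - c * d j) := by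
      ext i j
      by_cases hij : i = j
      · subst hij; simp
      · simp [Matrix.one_apply_ne hij, Matrix.diagonal_apply_ne _ hij, hij]
    have hdV : V.det * Vᵀ.det = 1 := by
      rw [← Matrix.det_mul, hV₁, Matrix.det_one]
    rw [h1, h2, Matrix.det_mul, Matrix.det_mul, Matrix.det_diagonal,
      mul_comm V.det, mul_assoc, hdV, mul_one]
  -- product splitting
  have hprod : ∀ (w c : ℝ),
      ∏ j : Fin M, ((w - β₂) - c * d j)
        = (w - β₂) ^ (M - N) * ∏ k : Fin N, ((w - β₂) - c * σ k ^ 2) := by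
    intro w c
    set f : ℕ → ℝ := fun n => if h : n < N then (w - β₂) - c * σ ⟨n, h⟩ ^ 2 else (w - β₂)
      with hf
    have h1 : ∀ j : Fin M, (w - β₂) - c * d j = f (j : ℕ) := by
      intro j
      by_cases h : (j : ℕ) < N <;> simp [hd, hf, h]
    rw [Finset.prod_congr rfl (fun j _ => h1 j), Fin.prod_univ_eq_prod_range f M]
    obtain ⟨K, hK⟩ : ∃ K, M = N + K := ⟨M - N, (Nat.add_sub_cancel' hNM).symm⟩
    rw [hK, Finset.prod_range_add, Nat.add_sub_cancel_left, mul_comm]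
    congr 1
    · rw [Finset.prod_congr rfl fun n _ => show f (N + n) = (w - β₂) by
        simp [hf, Nat.not_lt.mpr (Nat.le_add_right N n)]]
      simp
    · rw [← Fin.prod_univ_eq_prod_range f N]
      refine Finset.prod_congr rfl fun k _ => ?_
      simp [hf, k.isLt]
  -- the key identity for w ≠ β₁
  have key : ∀ w : ℝ, w ∈ ({β₁}ᶜ : Set ℝ) → F w = G w := by
    intro w hw
    have hw' : w - β₁ ≠ 0 := sub_ne_zero.mpr hw
    have hinv : ((w - β₁) • (1 : Matrix (Fin N) (Fin N) ℝ)) * ((w - β₁)⁻¹ • 1) = 1 := by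
      rw [Matrix.smul_mul, Matrix.mul_smul, Matrix.mul_one, smul_smul,
        mul_inv_cancel₀ hw', one_smul]
    have : Invertible ((w - β₁) • (1 : Matrix (Fin N) (Fin N) ℝ)) :=
      invertibleOfRightInverse _ _ hinv
    have hiOf : ⅟((w - β₁) • (1 : Matrix (Fin N) (Fin N) ℝ)) = (w - β₁)⁻¹ • 1 :=
      invOf_eq_right_inv hinv
    have hS : ((w - β₂) • (1 : Matrix (Fin M) (Fin M) ℝ) - β₃ • (Yᵀ * Y))
          - ((-β₄) • Yᵀ) * ((w - β₁)⁻¹ • (1 : Matrix (Fin N) (Fin N) ℝ)) * ((-β₄) • Y)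
        = (w - β₂) • (1 : Matrix (Fin M) (Fin M) ℝ)
            - (β₃ + β₄ ^ 2 * (w - β₁)⁻¹) • (Yᵀ * Y) := by
      simp only [Matrix.smul_mul, Matrix.mul_smul, Matrix.mul_one, smul_smul]
      rw [sub_sub, ← add_smul]
      congr 1
      ring_nf
    have hdetA : ((w - β₁) • (1 : Matrix (Fin N) (Fin N) ℝ)).det = (w - β₁) ^ N := by
      simp [Matrix.det_smul]
    rw [hF]
    simp only
    rw [Matrix.det_fromBlocks₁₁, hiOf, hS, hdetS w _, hprod w _, hdetA, hG]
    simp only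
    rw [show (w - β₁) ^ N = ∏ _k : Fin N, (w - β₁) by simp, mul_left_comm,
      ← Finset.prod_mul_distrib]
    congr 1
    refine Finset.prod_congr rfl (fun k _ => ?_)
    field_simp
    ring
  -- continuity of both sides
  have hFc : Continuous F := by
    apply Continuous.matrix_det
    apply continuous_matrix
    intro i j
    cases i with
    | inl i => cases j with
      | inl j =>
        simp only [Matrix.fromBlocks_apply₁₁, Matrix.smul_apply, smul_eq_mul]
        fun_prop
      | inr j =>
        simp only [Matrix.fromBlocks_apply₁₂]
        exact continuous_const
    | inr i => cases j with
      | inl j =>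
        simp only [Matrix.fromBlocks_apply₂₁]
        exact continuous_const
      | inr j =>
        simp only [Matrix.fromBlocks_apply₂₂, Matrix.sub_apply, Matrix.smul_apply,
          smul_eq_mul]
        fun_prop
  have hGc : Continuous G := by
    apply Continuous.mul
    · fun_prop
    · exact continuous_finset_prod _ (fun k _ => by fun_prop)
  have hFG : F = G := Continuous.ext_on (dense_compl_singleton β₁) hFc hGc key
  exact congrFun hFG z
end

section
/- Suppose an estimator X̂ : ℝ^{N×M} → ℝ^{N×N} satisfies X̂(U·S·Vᵀ) = U·X̂(S)·Uᵀ for all orthogonal U ∈ O(N), V ∈ O(M), and all S ∈ ℝ^{N×M}. Then for every diagonal rectangular matrix D (i.e., D_{ij} = 0 for i ≠ j), the matrix X̂(D) is diagonal. -/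
/-!
Conjugating by the sign flip `I_i⁻` (diagonal, `-1` at `i`) on the left and by the matching
sign flip `J_i⁻` on the right fixes a rectangular diagonal `D`, since every nonzero entry of `D`
sits where both flips carry the same sign. Equivariance then gives `X̂(D) = I_i⁻ X̂(D) I_i⁻`,
whose `(i, j)` entry for `j ≠ i` reads `X̂(D)ᵢⱼ = -X̂(D)ᵢⱼ`.
-/

open Matrix

section SignFlip

variable {R κ : Type*} [Ring R] [DecidableEq κ]

def signFlip (i k : κ) : R := if k = i then -1 else 1

@[simp]
lemma signFlip_self (i : κ) : (signFlip i i : R) = -1 := if_pos rfl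

@[simp]
lemma signFlip_of_ne {i k : κ} (h : k ≠ i) : (signFlip i k : R) = 1 := if_neg h

lemma signFlip_mul_self (i k : κ) : (signFlip i k : R) * signFlip i k = 1 := by
  by_cases h : k = i <;> simp [signFlip, h]

end SignFlip

section Diagonal

variable {R m n : Type*} [CommSemiring R] [Fintype m] [Fintype n] [DecidableEq m] [DecidableEq n]

lemma diagonal_mul_transpose_self {s : m → R} (hs : ∀ a, s a * s a = 1) :
    diagonal s * (diagonal s)ᵀ = 1 := by
  rw [diagonal_transpose, diagonal_mul_diagonal, funext hs, diagonal_one]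

lemma transpose_diagonal_mul_self {s : m → R} (hs : ∀ a, s a * s a = 1) :
    (diagonal s)ᵀ * diagonal s = 1 := by
  rw [diagonal_transpose, ← diagonal_mul_transpose_self hs, diagonal_transpose]

lemma diagonal_mul_mul_transpose_diagonal_apply (u : m → R) (A : Matrix m n R) (v : n → R)
    (a : m) (b : n) : (diagonal u * A * (diagonal v)ᵀ) a b = u a * A a b * v b := by
  rw [diagonal_transpose, mul_diagonal, diagonal_mul]

lemma diagonal_mul_mul_transpose_diagonal_eq_self {u : m → R} {A : Matrix m n R} {v : n → R}
    (hA : ∀ a b, A a b ≠ 0 → u a * v b = 1) : diagonal u * A * (diagonal v)ᵀ = A := by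
  ext a b
  rw [diagonal_mul_mul_transpose_diagonal_apply]
  by_cases hab : A a b = 0
  · simp [hab]
  · rw [mul_right_comm, hA a b hab, one_mul]

end Diagonal

theorem equivariant_estimator_diagonal_X_general (N M : ℕ)
    (Xhat : Matrix (Fin N) (Fin M) ℝ → Matrix (Fin N) (Fin N) ℝ)
    (hEquiv : ∀ (U : Matrix (Fin N) (Fin N) ℝ) (V : Matrix (Fin M) (Fin M) ℝ)
        (S : Matrix (Fin N) (Fin M) ℝ),
        U * Uᵀ = 1 → Uᵀ * U = 1 → V * Vᵀ = 1 → Vᵀ * V = 1 →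
        Xhat (U * S * Vᵀ) = U * Xhat S * Uᵀ) :
    ∀ D : Matrix (Fin N) (Fin M) ℝ,
      (∀ (i : Fin N) (j : Fin M), (i : ℕ) ≠ (j : ℕ) → D i j = 0) →
      ∀ i j : Fin N, i ≠ j → Xhat D i j = 0 := by
  intro D hD i j hij
  -- Both flips are indexed through `Fin.val`, so they agree wherever `D` may be nonzero.
  set s : ℕ → ℝ := signFlip (i : ℕ)
  have hs : ∀ k, s k * s k = 1 := signFlip_mul_self _
  have hfix : (diagonal fun a : Fin N => s a) * D * (diagonal fun b : Fin M => s b)ᵀ = D :=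
    diagonal_mul_mul_transpose_diagonal_eq_self fun a b hab => by
      rw [← not_imp_comm.mp (hD a b) hab, hs]
  have hij_entry := congrFun (congrFun (hEquiv _ _ D
    (diagonal_mul_transpose_self (hs ·)) (transpose_diagonal_mul_self (hs ·))
    (diagonal_mul_transpose_self (hs ·)) (transpose_diagonal_mul_self (hs ·))) i) j
  rw [hfix, diagonal_mul_mul_transpose_diagonal_apply] at hij_entry
  have hji : (j : ℕ) ≠ i := Fin.val_ne_of_ne hij.symm
  simp only [s, signFlip_self, signFlip_of_ne hji] at hij_entry
  linarith

/-- If an estimator `X̂ : ℝ^{N×M} → ℝ^{N×N}` satisfies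
`X̂(U S Vᵀ) = U X̂(S) Uᵀ` for all orthogonal `U, V`, then `X̂(D)` is diagonal for
every diagonal rectangular matrix `D`. -/
theorem equivariant_estimator_diagonal_X (N M : ℕ) (hNM : N ≤ M)
    (Xhat : Matrix (Fin N) (Fin M) ℝ → Matrix (Fin N) (Fin N) ℝ)
    (hEquiv : ∀ (U : Matrix (Fin N) (Fin N) ℝ) (V : Matrix (Fin M) (Fin M) ℝ)
        (S : Matrix (Fin N) (Fin M) ℝ),
        U * Uᵀ = 1 → Uᵀ * U = 1 → V * Vᵀ = 1 → Vᵀ * V = 1 →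
        Xhat (U * S * Vᵀ) = U * Xhat S * Uᵀ) :
    ∀ D : Matrix (Fin N) (Fin M) ℝ,
      (∀ (i : Fin N) (j : Fin M), (i : ℕ) ≠ (j : ℕ) → D i j = 0) →
      ∀ i j : Fin N, i ≠ j → Xhat D i j = 0 :=
  equivariant_estimator_diagonal_X_general N M Xhat hEquiv
end

section
/- Suppose an estimator Ŷ : ℝ^{N×M} → ℝ^{N×M} satisfies Ŷ(U·S·Vᵀ) = U·Ŷ(S)·Vᵀ for all orthogonal U ∈ O(N), V ∈ O(M) and all S. Then for every diagonal rectangular matrix D ∈ ℝ^{N×M}, the matrix Ŷ(D) is diagonal; consequently, for a general S with singular value decomposition S = U_S·Γ·V_Sᵀ, the matrix U_Sᵀ·Ŷ(S)·V_S is diagonal, so Ŷ(S) has the same singular vectors as S. -/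
open Matrix

/-- If an estimator `Ŷ : ℝ^{N×M} → ℝ^{N×M}` satisfies `Ŷ(U S Vᵀ) = U Ŷ(S) Vᵀ` for
all orthogonal `U, V`, then `Ŷ(D)` is diagonal for every diagonal rectangular `D`;
consequently, for any `S` with SVD `S = U_S Γ V_Sᵀ` (`Γ` diagonal rectangular),
`U_Sᵀ Ŷ(S) V_S` is diagonal, i.e. `Ŷ(S)` has the same singular vectors as `S`. -/
theorem equivariant_estimator_diagonal_Y (N M : ℕ) (hNM : N ≤ M)
    (Yhat : Matrix (Fin N) (Fin M) ℝ → Matrix (Fin N) (Fin M) ℝ)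
    (hEquiv : ∀ (U : Matrix (Fin N) (Fin N) ℝ) (V : Matrix (Fin M) (Fin M) ℝ)
        (S : Matrix (Fin N) (Fin M) ℝ),
        U * Uᵀ = 1 → Uᵀ * U = 1 → V * Vᵀ = 1 → Vᵀ * V = 1 →
        Yhat (U * S * Vᵀ) = U * Yhat S * Vᵀ) :
    (∀ D : Matrix (Fin N) (Fin M) ℝ,
      (∀ (i : Fin N) (j : Fin M), (i : ℕ) ≠ (j : ℕ) → D i j = 0) →
      ∀ (i : Fin N) (j : Fin M), (i : ℕ) ≠ (j : ℕ) → Yhat D i j = 0) ∧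
    (∀ (S : Matrix (Fin N) (Fin M) ℝ)
        (US : Matrix (Fin N) (Fin N) ℝ) (VS : Matrix (Fin M) (Fin M) ℝ)
        (Γ : Matrix (Fin N) (Fin M) ℝ),
        US * USᵀ = 1 → USᵀ * US = 1 → VS * VSᵀ = 1 → VSᵀ * VS = 1 →
        (∀ (i : Fin N) (j : Fin M), (i : ℕ) ≠ (j : ℕ) → Γ i j = 0) →
        S = US * Γ * VSᵀ →
        ∀ (i : Fin N) (j : Fin M), (i : ℕ) ≠ (j : ℕ) →
          (USᵀ * Yhat S * VS) i j = 0) := by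
  have main : ∀ D : Matrix (Fin N) (Fin M) ℝ,
      (∀ (i : Fin N) (j : Fin M), (i : ℕ) ≠ (j : ℕ) → D i j = 0) →
      ∀ (i : Fin N) (j : Fin M), (i : ℕ) ≠ (j : ℕ) → Yhat D i j = 0 := by
    intro D hD i j hij
    set ε : Fin N → ℝ := fun k => if (k : ℕ) = (j : ℕ) then -1 else 1 with hε
    set δ : Fin M → ℝ := fun l => if (l : ℕ) = (j : ℕ) then -1 else 1 with hδ
    have hε2 : ∀ k, ε k * ε k = 1 := by
      intro k; simp only [hε]; split <;> norm_num
    have hδ2 : ∀ l, δ l * δ l = 1 := by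
      intro l; simp only [hδ]; split <;> norm_num
    have hU1 : diagonal ε * (diagonal ε)ᵀ = 1 := by
      rw [diagonal_transpose, diagonal_mul_diagonal]
      have : (fun k => ε k * ε k) = fun _ => (1 : ℝ) := funext hε2
      rw [this]; exact diagonal_one
    have hU2 : (diagonal ε)ᵀ * diagonal ε = 1 := by
      rwa [diagonal_transpose] at hU1 ⊢
    have hV1 : diagonal δ * (diagonal δ)ᵀ = 1 := by
      rw [diagonal_transpose, diagonal_mul_diagonal]
      have : (fun l => δ l * δ l) = fun _ => (1 : ℝ) := funext hδ2
      rw [this]; exact diagonal_one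
    have hV2 : (diagonal δ)ᵀ * diagonal δ = 1 := by
      rwa [diagonal_transpose] at hV1 ⊢
    have hfix : diagonal ε * D * (diagonal δ)ᵀ = D := by
      rw [diagonal_transpose]
      ext k l
      rw [mul_diagonal, diagonal_mul]
      by_cases h : (k : ℕ) = (l : ℕ)
      · simp only [hε, hδ, h]
        split <;> ring
      · rw [hD k l h]; ring
    have key := hEquiv (diagonal ε) (diagonal δ) D hU1 hU2 hV1 hV2
    rw [hfix] at key
    have : Yhat D i j = (diagonal ε * Yhat D * (diagonal δ)ᵀ) i j := by
      conv_lhs => rw [key]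
    rw [diagonal_transpose, mul_diagonal, diagonal_mul] at this
    have hεi : ε i = 1 := by simp only [hε]; rw [if_neg hij]
    have hδj : δ j = -1 := by simp only [hδ]; simp
    rw [hεi, hδj] at this
    linarith
  refine ⟨main, ?_⟩
  intro S US VS Γ h1 h2 h3 h4 hΓ hS i j hij
  have key := hEquiv US VS Γ h1 h2 h3 h4
  rw [hS, key]
  have e : USᵀ * (US * Yhat Γ * VSᵀ) * VS = Yhat Γ := by
    simp only [Matrix.mul_assoc]
    rw [h4, Matrix.mul_one, ← Matrix.mul_assoc, h2, Matrix.one_mul]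
  rw [e]
  exact main Γ hΓ i j hij
end

section
/- Let P_X be a probability density on symmetric N×N matrices invariant under conjugation by orthogonal matrices, P_Y and P_W probability densities on N×M matrices invariant under left and right multiplication by orthogonal matrices. Then the posterior mean estimator X̂*(S) = E[X | S] for the model S = X·Y + W satisfies X̂*(U·S·Vᵀ) = U·X̂*(S)·Uᵀ for all U ∈ O(N), V ∈ O(M); in other words the Bayes estimator of X is a rotation invariant estimator (its eigenvectors coincide with the left singular vectors of S). -/
/-!
Under the linear change of variables `(X, Y) ↦ (U X Uᵀ, U Y Vᵀ)`, whose determinant is `±1`, the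
invariance of the three priors turns the joint density at the observation `U S Vᵀ` into the joint
density at `S`, because `(U X Uᵀ)(U Y Vᵀ) = U (X Y) Vᵀ`. Hence the normalisation at `U S Vᵀ` equals
the one at `S`, while the first moment of `X` picks up the conjugation by `U`.
-/

open Matrix MeasureTheory

section
variable {R : Type*} [CommRing R] {l m n : Type*} [Fintype l] [Fintype m] [Fintype n] [DecidableEq m]

theorem Matrix.det_mulRightLinearMap (B : Matrix m m R) :
    LinearMap.det (mulRightLinearMap l R B) = B.det ^ Fintype.card l := by
  have hrows : mulRightLinearMap l R B =
      (LinearMap.pi fun i => (toLin' Bᵀ).comp (LinearMap.proj i) : (l → m → R) →ₗ[R] l → m → R) := by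
    ext X i j
    change _ = (Bᵀ *ᵥ X i) j
    simp [mul_apply, mulVec, dotProduct, mul_comm]
  rw [hrows]
  exact (LinearMap.det_pi _).trans (by simp [LinearMap.det_toLin'])

theorem Matrix.det_mulLeftLinearMap (A : Matrix m m R) :
    LinearMap.det (mulLeftLinearMap n R A) = A.det ^ Fintype.card n := by
  have htranspose : mulRightLinearMap n R Aᵀ = (transposeLinearEquiv m n R R).toLinearMap ∘ₗ
      mulLeftLinearMap n R A ∘ₗ (transposeLinearEquiv m n R R).symm.toLinearMap := by
    ext X i j
    simp [mul_apply, mul_comm]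
  rw [← LinearMap.det_conj _ (transposeLinearEquiv m n R R), ← htranspose,
    det_mulRightLinearMap, det_transpose]

theorem Matrix.det_mulRightLinearMap_comp_mulLeftLinearMap [DecidableEq n] (A : Matrix m m R)
    (B : Matrix n n R) :
    LinearMap.det (mulRightLinearMap m R B ∘ₗ mulLeftLinearMap n R A) =
      A.det ^ Fintype.card n * B.det ^ Fintype.card m := by
  rw [LinearMap.det_comp, det_mulLeftLinearMap, det_mulRightLinearMap, mul_comm]

end

theorem Matrix.abs_det_eq_one_of_mul_transpose_eq_one {R : Type*} [CommRing R] [LinearOrder R]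
    [IsStrictOrderedRing R] {n : Type*} [Fintype n] [DecidableEq n] {U : Matrix n n R}
    (hU : U * Uᵀ = 1) : |U.det| = 1 := by
  have h := congrArg det hU
  rw [det_mul, det_transpose, det_one, ← sq, ← sq_abs] at h
  exact (pow_left_inj₀ (abs_nonneg _) zero_le_one two_ne_zero).1 (h.trans (one_pow 2).symm)

theorem LinearMap.integral_comp_of_abs_det_eq_one {E F : Type*} [NormedAddCommGroup E]
    [NormedSpace ℝ E] [MeasurableSpace E] [BorelSpace E] [FiniteDimensional ℝ E]
    [NormedAddCommGroup F] [NormedSpace ℝ F] (μ : Measure E) [μ.IsAddHaarMeasure]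
    {f : E →ₗ[ℝ] E} (hf : |LinearMap.det f| = 1) (g : E → F) :
    ∫ x, g (f x) ∂μ = ∫ x, g x ∂μ := by
  have hdet : LinearMap.det f ≠ 0 := by rintro h; simp [h] at hf
  have hmp : MeasurePreserving f μ μ :=
    ⟨f.continuous_of_finiteDimensional.measurable, by
      rw [Measure.map_linearMap_addHaar_eq_smul_addHaar μ hdet, abs_inv, hf, inv_one,
        ENNReal.ofReal_one, one_smul]⟩
  have hinj : Function.Injective f :=
    (Module.End.isUnit_iff f).1 ((LinearMap.isUnit_iff_isUnit_det f).2 hdet.isUnit) |>.1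
  exact hmp.integral_comp
    (LinearMap.isClosedEmbedding_of_injective (LinearMap.ker_eq_bot.2 hinj)).measurableEmbedding g

theorem integral_mul_matrix_mul_apply {𝕜 α : Type*} [RCLike 𝕜] [MeasurableSpace α]
    {μ : Measure α} {l m n o : Type*} [Fintype m] [Fintype n] (f : α → 𝕜) (X : α → Matrix m n 𝕜)
    (hX : ∀ k k', Integrable (fun a => f a * X a k k') μ)
    (A : Matrix l m 𝕜) (B : Matrix n o 𝕜) (i : l) (j : o) :
    ∫ a, f a * (A * X a * B) i j ∂μ = (A * of (fun k k' => ∫ a, f a * X a k k' ∂μ) * B) i j := by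
  have hsum : ∀ (Z : Matrix m n 𝕜) (c : 𝕜),
      c * (A * Z * B) i j = ∑ k', ∑ k, A i k * B k' j * (c * Z k k') := by
    intro Z c
    simp only [mul_apply, Finset.mul_sum, Finset.sum_mul]
    exact Finset.sum_congr rfl fun _ _ => Finset.sum_congr rfl fun _ _ => by ring
  calc ∫ a, f a * (A * X a * B) i j ∂μ
      = ∫ a, ∑ k', ∑ k, A i k * B k' j * (f a * X a k k') ∂μ := by simp only [hsum]
    _ = ∑ k', ∑ k, A i k * B k' j * ∫ a, f a * X a k k' ∂μ := by
      rw [integral_finsetSum _ fun k' _ => integrable_finsetSum _ fun k _ => (hX k k').const_mul _]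
      simp only [integral_finsetSum _ fun k _ => (hX k _).const_mul _, integral_const_mul]
    _ = _ := by simpa using (hsum (of fun k k' => ∫ a, f a * X a k k' ∂μ) 1).symm

section
variable {m n : Type*} [Fintype m] [Fintype n]

def rotateUnknowns (U : Matrix m m ℝ) (V : Matrix n n ℝ) :
    (m → m → ℝ) × (m → n → ℝ) →ₗ[ℝ] (m → m → ℝ) × (m → n → ℝ) :=
  LinearMap.prodMap (mulRightLinearMap m ℝ Uᵀ ∘ₗ mulLeftLinearMap m ℝ U)
    (mulRightLinearMap m ℝ Vᵀ ∘ₗ mulLeftLinearMap n ℝ U)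

theorem rotateUnknowns_apply (U : Matrix m m ℝ) (V : Matrix n n ℝ)
    (p : (m → m → ℝ) × (m → n → ℝ)) :
    rotateUnknowns U V p = (of.symm (U * of p.1 * Uᵀ), of.symm (U * of p.2 * Vᵀ)) :=
  rfl

def jointDensity (pX : Matrix m m ℝ → ℝ) (pY pW : Matrix m n ℝ → ℝ) (S : Matrix m n ℝ)
    (p : (m → m → ℝ) × (m → n → ℝ)) : ℝ :=
  pX (of p.1) * pY (of p.2) * pW (S - of p.1 * of p.2)

variable [DecidableEq m]

theorem jointDensity_rotateUnknowns {pX : Matrix m m ℝ → ℝ} {pY pW : Matrix m n ℝ → ℝ}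
    {U : Matrix m m ℝ} {V : Matrix n n ℝ} (hU : Uᵀ * U = 1)
    (hpX : ∀ X, pX (U * X * Uᵀ) = pX X) (hpY : ∀ Y, pY (U * Y * Vᵀ) = pY Y)
    (hpW : ∀ W, pW (U * W * Vᵀ) = pW W) (S : Matrix m n ℝ) (p : (m → m → ℝ) × (m → n → ℝ)) :
    jointDensity pX pY pW (U * S * Vᵀ) (rotateUnknowns U V p) = jointDensity pX pY pW S p := by
  have hprod : (U * of p.1 * Uᵀ) * (U * of p.2 * Vᵀ) = U * (of p.1 * of p.2) * Vᵀ := by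
    simp only [Matrix.mul_assoc, ← Matrix.mul_assoc Uᵀ, hU, Matrix.one_mul]
  simp only [jointDensity, rotateUnknowns_apply, Equiv.apply_symm_apply, hpX, hpY, hprod,
    ← Matrix.sub_mul, ← Matrix.mul_sub, hpW]

variable [DecidableEq n]

theorem abs_det_rotateUnknowns {U : Matrix m m ℝ} {V : Matrix n n ℝ} (hU : U * Uᵀ = 1)
    (hV : V * Vᵀ = 1) : |LinearMap.det (rotateUnknowns U V)| = 1 := by
  rw [rotateUnknowns, LinearMap.det_prodMap, abs_mul]
  -- view the factors as maps on `Matrix`, where the determinant lemmas match syntactically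
  change |LinearMap.det (mulRightLinearMap m ℝ Uᵀ ∘ₗ mulLeftLinearMap m ℝ U)| *
    |LinearMap.det (mulRightLinearMap m ℝ Vᵀ ∘ₗ mulLeftLinearMap n ℝ U)| = 1
  simp only [det_mulRightLinearMap_comp_mulLeftLinearMap, det_transpose, abs_mul, abs_pow,
    abs_det_eq_one_of_mul_transpose_eq_one hU, abs_det_eq_one_of_mul_transpose_eq_one hV, one_pow,
    one_mul]

theorem integral_comp_rotateUnknowns {U : Matrix m m ℝ} {V : Matrix n n ℝ} (hU : U * Uᵀ = 1)
    (hV : V * Vᵀ = 1) (g : (m → m → ℝ) × (m → n → ℝ) → ℝ) :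
    ∫ p, g (rotateUnknowns U V p) = ∫ p, g p := by
  -- instance search does not find these Haar measures on iterated function spaces
  have := Measure.pi.isAddHaarMeasure fun _ : m => (volume : Measure (m → ℝ))
  have := Measure.pi.isAddHaarMeasure fun _ : m => (volume : Measure (n → ℝ))
  have := Measure.prod.instIsAddHaarMeasure (Measure.pi fun _ : m => (volume : Measure (m → ℝ)))
    (Measure.pi fun _ : m => (volume : Measure (n → ℝ)))
  exact (rotateUnknowns U V).integral_comp_of_abs_det_eq_one volume (abs_det_rotateUnknowns hU hV) g

end

theorem posterior_mean_X_is_RIE_general (N M : ℕ)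
    (pX : Matrix (Fin N) (Fin N) ℝ → ℝ)
    (pY pW : Matrix (Fin N) (Fin M) ℝ → ℝ)
    (hpX : ∀ (O : Matrix (Fin N) (Fin N) ℝ), O * Oᵀ = 1 → Oᵀ * O = 1 →
      ∀ X, pX (O * X * Oᵀ) = pX X)
    (hpY : ∀ (U : Matrix (Fin N) (Fin N) ℝ) (V : Matrix (Fin M) (Fin M) ℝ),
      U * Uᵀ = 1 → Uᵀ * U = 1 → V * Vᵀ = 1 → Vᵀ * V = 1 →
      ∀ Y, pY (U * Y * Vᵀ) = pY Y)
    (hpW : ∀ (U : Matrix (Fin N) (Fin N) ℝ) (V : Matrix (Fin M) (Fin M) ℝ),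
      U * Uᵀ = 1 → Uᵀ * U = 1 → V * Vᵀ = 1 → Vᵀ * V = 1 →
      ∀ W, pW (U * W * Vᵀ) = pW W)
    -- the Bayes integrals are assumed finite (integrable integrands):
    (hInt1 : ∀ (S : Matrix (Fin N) (Fin M) ℝ) (i j : Fin N),
      Integrable (fun p : (Fin N → Fin N → ℝ) × (Fin N → Fin M → ℝ) =>
        pX (Matrix.of p.1) * pY (Matrix.of p.2) *
          pW (S - Matrix.of p.1 * Matrix.of p.2) * p.1 i j))
    -- the posterior mean estimator:
    (Xhat : Matrix (Fin N) (Fin M) ℝ → Matrix (Fin N) (Fin N) ℝ)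
    (hXhat : ∀ (S : Matrix (Fin N) (Fin M) ℝ) (i j : Fin N),
      Xhat S i j =
        (∫ p : (Fin N → Fin N → ℝ) × (Fin N → Fin M → ℝ),
          pX (Matrix.of p.1) * pY (Matrix.of p.2) *
            pW (S - Matrix.of p.1 * Matrix.of p.2) * p.1 i j) /
        (∫ p : (Fin N → Fin N → ℝ) × (Fin N → Fin M → ℝ),
          pX (Matrix.of p.1) * pY (Matrix.of p.2) *
            pW (S - Matrix.of p.1 * Matrix.of p.2))) :
    ∀ (U : Matrix (Fin N) (Fin N) ℝ) (V : Matrix (Fin M) (Fin M) ℝ)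
      (S : Matrix (Fin N) (Fin M) ℝ),
      U * Uᵀ = 1 → Uᵀ * U = 1 → V * Vᵀ = 1 → Vᵀ * V = 1 →
      Xhat (U * S * Vᵀ) = U * Xhat S * Uᵀ := by
  intro U V S hU hU' hV hV'
  set J := jointDensity pX pY pW
  have hJ : ∀ p, J (U * S * Vᵀ) (rotateUnknowns U V p) = J S p :=
    jointDensity_rotateUnknowns hU' (hpX U hU hU') (hpY U V hU hU' hV hV')
      (hpW U V hU hU' hV hV') S
  have hXhat_eq : ∀ S, Xhat S = (∫ p, J S p)⁻¹ • of fun k l => ∫ p, J S p * p.1 k l := by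
    intro S
    ext i j
    rw [hXhat, div_eq_inv_mul]
    rfl
  have hden : ∫ p, J (U * S * Vᵀ) p = ∫ p, J S p := by
    rw [← integral_comp_rotateUnknowns hU hV]
    simp only [hJ]
  have hnum : ∀ i j, ∫ p, J (U * S * Vᵀ) p * p.1 i j =
      (U * of (fun k l => ∫ p, J S p * p.1 k l) * Uᵀ) i j := by
    intro i j
    rw [← integral_comp_rotateUnknowns hU hV]
    simp only [hJ]
    exact integral_mul_matrix_mul_apply _ (fun p => of (Prod.fst p)) (hInt1 S) U Uᵀ i j
  ext i j
  rw [hXhat_eq, hXhat_eq, hden, Matrix.mul_smul, Matrix.smul_mul]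
  simp only [hnum]
  rfl

/-- For the model `S = X·Y + W` with rotation invariant prior `pX` on symmetric
`N×N` matrices and bi-rotation invariant priors `pY, pW` on `N×M` matrices, the
posterior mean estimator `X̂*(S) = E[X|S]` (given entrywise by Bayes integrals
over the matrix entries, with Lebesgue reference measure) is equivariant:
`X̂*(U S Vᵀ) = U X̂*(S) Uᵀ` for all orthogonal `U, V`; hence it is a rotation
invariant estimator. -/
theorem posterior_mean_X_is_RIE (N M : ℕ)
    (pX : Matrix (Fin N) (Fin N) ℝ → ℝ)
    (pY pW : Matrix (Fin N) (Fin M) ℝ → ℝ)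
    (hpXsym : ∀ X, pX X ≠ 0 → X = Xᵀ)
    (hpX : ∀ (O : Matrix (Fin N) (Fin N) ℝ), O * Oᵀ = 1 → Oᵀ * O = 1 →
      ∀ X, pX (O * X * Oᵀ) = pX X)
    (hpY : ∀ (U : Matrix (Fin N) (Fin N) ℝ) (V : Matrix (Fin M) (Fin M) ℝ),
      U * Uᵀ = 1 → Uᵀ * U = 1 → V * Vᵀ = 1 → Vᵀ * V = 1 →
      ∀ Y, pY (U * Y * Vᵀ) = pY Y)
    (hpW : ∀ (U : Matrix (Fin N) (Fin N) ℝ) (V : Matrix (Fin M) (Fin M) ℝ),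
      U * Uᵀ = 1 → Uᵀ * U = 1 → V * Vᵀ = 1 → Vᵀ * V = 1 →
      ∀ W, pW (U * W * Vᵀ) = pW W)
    -- the Bayes integrals are assumed finite (integrable integrands):
    (hInt0 : ∀ S : Matrix (Fin N) (Fin M) ℝ,
      Integrable (fun p : (Fin N → Fin N → ℝ) × (Fin N → Fin M → ℝ) =>
        pX (Matrix.of p.1) * pY (Matrix.of p.2) *
          pW (S - Matrix.of p.1 * Matrix.of p.2)))
    (hInt1 : ∀ (S : Matrix (Fin N) (Fin M) ℝ) (i j : Fin N),
      Integrable (fun p : (Fin N → Fin N → ℝ) × (Fin N → Fin M → ℝ) =>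
        pX (Matrix.of p.1) * pY (Matrix.of p.2) *
          pW (S - Matrix.of p.1 * Matrix.of p.2) * p.1 i j))
    -- the normalization (denominator) is nonzero:
    (hDen : ∀ S : Matrix (Fin N) (Fin M) ℝ,
      (∫ p : (Fin N → Fin N → ℝ) × (Fin N → Fin M → ℝ),
        pX (Matrix.of p.1) * pY (Matrix.of p.2) *
          pW (S - Matrix.of p.1 * Matrix.of p.2)) ≠ 0)
    -- the posterior mean estimator:
    (Xhat : Matrix (Fin N) (Fin M) ℝ → Matrix (Fin N) (Fin N) ℝ)
    (hXhat : ∀ (S : Matrix (Fin N) (Fin M) ℝ) (i j : Fin N),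
      Xhat S i j =
        (∫ p : (Fin N → Fin N → ℝ) × (Fin N → Fin M → ℝ),
          pX (Matrix.of p.1) * pY (Matrix.of p.2) *
            pW (S - Matrix.of p.1 * Matrix.of p.2) * p.1 i j) /
        (∫ p : (Fin N → Fin N → ℝ) × (Fin N → Fin M → ℝ),
          pX (Matrix.of p.1) * pY (Matrix.of p.2) *
            pW (S - Matrix.of p.1 * Matrix.of p.2))) :
    ∀ (U : Matrix (Fin N) (Fin N) ℝ) (V : Matrix (Fin M) (Fin M) ℝ)
      (S : Matrix (Fin N) (Fin M) ℝ),
      U * Uᵀ = 1 → Uᵀ * U = 1 → V * Vᵀ = 1 → Vᵀ * V = 1 →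
      Xhat (U * S * Vᵀ) = U * Xhat S * Uᵀ :=
  posterior_mean_X_is_RIE_general N M pX pY pW hpX hpY hpW hInt1 Xhat hXhat
end
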